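/- Let P₀ be a finite MDP with discount γ ∈ [0,1) whose state space is partitioned into Ω₁, …, Ω_n ordered so that optimal-policy transitions never move to a strictly lower index, with the optimal value finite everywhere. Define value functions v_n, v_{n−1}, …, v₁ recursively: v_n is the optimal value function of the restriction of P₀ to Ω_n (with heavy penalty for leaving), and for i < n, v_i is the optimal value function of the restriction of P₀ to Ω_i using as boundary reward v₊(s') = γ v_j(s') for s' ∈ Ω_j with j > i (and heavy penalty for transitions to lower-indexed regions). Then for every i, v_i agrees with the optimal value function v₀* of P₀ on Ω_i. -/

import Mathlib

open Finset

/-- A finite Markov Decision Process. -/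
structure MDP (S A : Type) [Fintype S] where
  act : S → Finset A
  act_nonempty : ∀ s, (act s).Nonempty
  p : S → A → S → ℝ
  p_nonneg : ∀ s a s', 0 ≤ p s a s'
  p_sum_one : ∀ s a, ∑ s', p s a s' = 1
  r : S → A → S → ℝ

variable {S A : Type} [Fintype S]

/-- State-action value of a function `v`. -/
def MDP.Q (M : MDP S A) (γ : ℝ) (v : S → ℝ) (s : S) (a : A) : ℝ :=
  ∑ s', M.p s a s' * (M.r s a s' + γ * v s')

/-- Bellman optimality operator. -/
def MDP.T (M : MDP S A) (γ : ℝ) (v : S → ℝ) (s : S) : ℝ :=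
  (M.act s).sup' (M.act_nonempty s) (M.Q γ v s)

/-- Policy evaluation operator. -/
def MDP.Tpi (M : MDP S A) (γ : ℝ) (π : S → A) (v : S → ℝ) (s : S) : ℝ :=
  M.Q γ v s (π s)

/-- `π` is a policy of `M`. -/
def MDP.IsPolicy (M : MDP S A) (π : S → A) : Prop := ∀ s, π s ∈ M.act s

/-!
Downward induction on the region index. Once `vfun j = v0` on every higher region, the
boundary rewards of the `i`-th restriction are `r + γ v0`, and the extension of `v0|Ω i` by
zero is a fixed point of its Bellman operator: inside `Ω i` every action's Q-value is at
most its Q-value in `M0` (the penalty `M` outweighs `γ v0`), with equality for the optimal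
action, which never moves to a lower region; outside `Ω i` the absorbing zero-reward states
keep the value `0`. The Bellman operator is a `γ`-contraction for the sup distance, so this
fixed point is `vfun i`.
-/

theorem Finset.sup'_le_sup'_add {ι β : Type*} [LinearOrder β] [AddCommGroup β]
    [IsOrderedAddMonoid β] {s : Finset ι} (hs : s.Nonempty) {f g : ι → β} {c : β}
    (h : ∀ i ∈ s, f i ≤ g i + c) : s.sup' hs f ≤ s.sup' hs g + c :=
  Finset.sup'_le _ _ fun i hi => (h i hi).trans (add_le_add_left (le_sup' g hi) c)

theorem Finset.abs_sup'_sub_sup'_le {ι β : Type*} [LinearOrder β] [AddCommGroup β]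
    [IsOrderedAddMonoid β] {s : Finset ι} (hs : s.Nonempty) {f g : ι → β} {c : β}
    (h : ∀ i ∈ s, |f i - g i| ≤ c) : |s.sup' hs f - s.sup' hs g| ≤ c :=
  abs_sub_le_iff.2
    ⟨sub_le_iff_le_add'.2 <| (sup'_le_sup'_add hs fun i hi =>
        sub_le_iff_le_add'.1 (abs_sub_le_iff.1 (h i hi)).1),
      sub_le_iff_le_add'.2 <| (sup'_le_sup'_add hs fun i hi =>
        sub_le_iff_le_add'.1 (abs_sub_le_iff.1 (h i hi)).2)⟩

namespace MDP

theorem abs_Q_sub_Q_le (M : MDP S A) {γ : ℝ} (hγ : 0 ≤ γ) (v w : S → ℝ) (s : S) (a : A) :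
    |M.Q γ v s a - M.Q γ w s a| ≤ γ * dist v w := by
  have hdiff : M.Q γ v s a - M.Q γ w s a = γ * ∑ s', M.p s a s' * (v s' - w s') := by
    simp only [MDP.Q, ← Finset.sum_sub_distrib, Finset.mul_sum]
    exact Finset.sum_congr rfl fun _ _ => by ring
  rw [hdiff, abs_mul, abs_of_nonneg hγ]
  gcongr
  calc |∑ s', M.p s a s' * (v s' - w s')|
      ≤ ∑ s', M.p s a s' * |v s' - w s'| := by
        refine (abs_sum_le_sum_abs _ _).trans_eq (Finset.sum_congr rfl fun s' _ => ?_)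
        rw [abs_mul, abs_of_nonneg (M.p_nonneg s a s')]
    _ ≤ ∑ s', M.p s a s' * dist v w := by
        gcongr with s'
        · exact M.p_nonneg s a s'
        · exact dist_le_pi_dist v w s'
    _ = dist v w := by rw [← Finset.sum_mul, M.p_sum_one, one_mul]

theorem dist_T_le (M : MDP S A) {γ : ℝ} (hγ : 0 ≤ γ) (v w : S → ℝ) :
    dist (M.T γ v) (M.T γ w) ≤ γ * dist v w :=
  (dist_pi_le_iff (mul_nonneg hγ dist_nonneg)).2 fun s =>
    (Real.dist_eq _ _).trans_le <|
      Finset.abs_sup'_sub_sup'_le _ fun a _ => M.abs_Q_sub_Q_le hγ v w s a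

theorem contractingWith_T (M : MDP S A) {γ : ℝ} (hγ0 : 0 ≤ γ) (hγ1 : γ < 1) :
    ContractingWith ⟨γ, hγ0⟩ (M.T γ) :=
  ⟨hγ1, LipschitzWith.of_dist_le_mul fun v w => M.dist_T_le hγ0 v w⟩

theorem p_eq_zero_of_p_self_eq_one (M : MDP S A) {s s' : S} {a : A} (h : M.p s a s = 1)
    (hs' : s' ≠ s) : M.p s a s' = 0 := by
  classical
  have hsum := M.p_sum_one s a
  rw [← Finset.add_sum_erase _ _ (mem_univ s), h, add_eq_left] at hsum
  exact (Finset.sum_eq_zero_iff_of_nonneg fun x _ => M.p_nonneg s a x).1 hsum s'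
    (mem_erase.2 ⟨hs', mem_univ s'⟩)

theorem Q_of_absorbing (M : MDP S A) (γ : ℝ) (v : S → ℝ) {s : S} {a : A}
    (hp : M.p s a s = 1) (hr : ∀ s', M.r s a s' = 0) : M.Q γ v s a = γ * v s := by
  rw [MDP.Q, Finset.sum_eq_single s
    (fun s' _ hs' => by rw [M.p_eq_zero_of_p_self_eq_one hp hs', zero_mul])
    (fun hs => absurd (mem_univ s) hs), hp, hr, one_mul, zero_add]

theorem T_of_absorbing (M : MDP S A) (γ : ℝ) (v : S → ℝ) {s : S}
    (hp : ∀ a, M.p s a s = 1) (hr : ∀ a s', M.r s a s' = 0) : M.T γ v s = γ * v s := by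
  have hQ : M.Q γ v s = fun _ => γ * v s := funext fun a => M.Q_of_absorbing γ v (hp a) (hr a)
  rw [MDP.T, hQ, Finset.sup'_const]

theorem T_eq_of_dominated {P M : MDP S A} {γ : ℝ} {w v : S → ℝ} {t : S} {a : A}
    (hact : P.act t = M.act t) (hp : ∀ b s', P.p t b s' = M.p t b s')
    (hle : ∀ b s', P.r t b s' + γ * w s' ≤ M.r t b s' + γ * v s')
    (ha : a ∈ M.act t)
    (heq : ∀ s', M.p t a s' ≠ 0 → P.r t a s' + γ * w s' = M.r t a s' + γ * v s')
    (hopt : M.Q γ v t a = M.T γ v t) : P.T γ w t = M.T γ v t := by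
  apply le_antisymm
  · refine Finset.sup'_le _ _ fun b hb => ?_
    calc P.Q γ w t b ≤ M.Q γ v t b := by
          refine Finset.sum_le_sum fun s' _ => ?_
          rw [hp]
          exact mul_le_mul_of_nonneg_left (hle b s') (M.p_nonneg t b s')
      _ ≤ M.T γ v t := Finset.le_sup' _ (hact ▸ hb)
  · calc M.T γ v t = M.Q γ v t a := hopt.symm
      _ = P.Q γ w t a := Finset.sum_congr rfl fun s' _ => by
          rw [hp]
          by_cases h : M.p t a s' = 0
          · rw [h, zero_mul, zero_mul]
          · rw [heq s' h]
      _ ≤ P.T γ w t := Finset.le_sup' _ (hact.symm ▸ ha)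

theorem neg_le_mul_of_penalty [Fintype A] [Nonempty S] [Nonempty A] (M0 : MDP S A) {γ : ℝ}
    (hγ0 : 0 ≤ γ) (hγ1 : γ < 1) {v0 : S → ℝ} {M : ℝ}
    (hM : (univ.sup' univ_nonempty (fun x : S × A × S => |M0.r x.1 x.2.1 x.2.2|) +
             γ * univ.sup' univ_nonempty (fun s => |v0 s|)) / (1 - γ) +
            univ.sup' univ_nonempty v0 - univ.inf' univ_nonempty v0 < M)
    (s : S) : -M ≤ γ * v0 s := by
  set R := univ.sup' univ_nonempty (fun x : S × A × S => |M0.r x.1 x.2.1 x.2.2|)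
  set V := univ.sup' univ_nonempty (fun s => |v0 s|)
  have hR : 0 ≤ R := (abs_nonneg _).trans
    (le_sup' (fun x : S × A × S => |M0.r x.1 x.2.1 x.2.2|) (mem_univ (Classical.arbitrary _)))
  have hV : |v0 s| ≤ V := le_sup' (fun s => |v0 s|) (mem_univ s)
  have hspread : univ.inf' univ_nonempty v0 ≤ univ.sup' univ_nonempty v0 :=
    (inf'_le _ (mem_univ s)).trans (le_sup' _ (mem_univ s))
  have hRV : γ * V ≤ (R + γ * V) / (1 - γ) := by
    rw [le_div_iff₀ (by linarith)]
    nlinarith [mul_nonneg (mul_nonneg hγ0 hγ0) ((abs_nonneg _).trans hV)]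
  have hγV : γ * -V ≤ γ * v0 s :=
    mul_le_mul_of_nonneg_left ((neg_le_neg hV).trans (neg_abs_le _)) hγ0
  linarith

theorem isFixedPt_T_indicator_of_restriction (P M0 : MDP S A) {γ : ℝ}
    {v0 : S → ℝ} (hv0 : ∀ s, v0 s = M0.T γ v0 s)
    {π : S → A} (hπ : M0.IsPolicy π) (hopt : ∀ s, v0 s = M0.Q γ v0 s (π s))
    {R F : Set S} (hπF : ∀ s ∈ R, ∀ s' ∈ F, M0.p s (π s) s' = 0)
    (hact : ∀ s ∈ R, P.act s = M0.act s)
    (hp_in : ∀ s ∈ R, ∀ a s', P.p s a s' = M0.p s a s')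
    (hp_abs : ∀ s ∉ R, ∀ a, P.p s a s = 1)
    (hr_in : ∀ s ∈ R, ∀ a, ∀ s' ∈ R, P.r s a s' = M0.r s a s')
    (hr_out : ∀ s ∈ R, ∀ a, ∀ s' ∉ R, s' ∉ F → P.r s a s' = M0.r s a s' + γ * v0 s')
    (hr_F : ∀ s ∈ R, ∀ a, ∀ s' ∉ R, s' ∈ F → P.r s a s' ≤ M0.r s a s' + γ * v0 s')
    (hr_abs : ∀ s ∉ R, ∀ a s', P.r s a s' = 0) :
    Function.IsFixedPt (P.T γ) (R.indicator v0) := by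
  funext t
  by_cases ht : t ∈ R
  · have hin : ∀ a, ∀ s' ∈ R,
        P.r t a s' + γ * R.indicator v0 s' = M0.r t a s' + γ * v0 s' := fun a s' hs' => by
      rw [hr_in t ht a s' hs', Set.indicator_of_mem hs']
    have hout : ∀ a, ∀ s' ∉ R, P.r t a s' + γ * R.indicator v0 s' = P.r t a s' :=
      fun a s' hs' => by rw [Set.indicator_of_notMem hs', mul_zero, add_zero]
    rw [Set.indicator_of_mem ht, hv0 t]
    refine T_eq_of_dominated (hact t ht) (hp_in t ht) (fun a s' => ?_) (hπ t) (fun s' hp => ?_)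
      ((hopt t).symm.trans (hv0 t))
    · by_cases hs'R : s' ∈ R
      · exact (hin a s' hs'R).le
      rw [hout a s' hs'R]
      by_cases hs'F : s' ∈ F
      · exact hr_F t ht a s' hs'R hs'F
      · exact (hr_out t ht a s' hs'R hs'F).le
    · by_cases hs'R : s' ∈ R
      · exact hin _ s' hs'R
      rw [hout _ s' hs'R]
      exact hr_out t ht _ s' hs'R fun hF => hp (hπF t ht s' hF)
  · rw [P.T_of_absorbing γ _ (hp_abs t ht) (hr_abs t ht), Set.indicator_of_notMem ht, mul_zero]

end MDP

theorem recursive_restriction_agrees_general [Fintype A] [Nonempty S] [Nonempty A]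
    (M0 : MDP S A) (γ : ℝ) (hγ0 : 0 ≤ γ) (hγ1 : γ < 1)
    (v0 : S → ℝ) (hv0 : ∀ s, v0 s = M0.T γ v0 s)
    (n : ℕ) (Ω : Fin n → Finset S)
    (hcover : ∀ s : S, ∃ i, s ∈ Ω i)
    -- an optimal policy whose transitions never decrease the region index
    (πstar : S → A) (hπ : M0.IsPolicy πstar)
    (hopt : ∀ s, v0 s = M0.Q γ v0 s (πstar s))
    (hmono : ∀ i j : Fin n, j < i → ∀ s ∈ Ω i, ∀ s' ∈ Ω j, M0.p s (πstar s) s' = 0)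
    -- a sufficiently large penalty
    (M : ℝ)
    (hM : (univ.sup' univ_nonempty (fun x : S × A × S => |M0.r x.1 x.2.1 x.2.2|) +
             γ * univ.sup' univ_nonempty (fun s => |v0 s|)) / (1 - γ) +
            univ.sup' univ_nonempty v0 - univ.inf' univ_nonempty v0 < M)
    -- the family of restricted MDPs and their optimal value functions
    (Pfam : Fin n → MDP S A) (vfun : Fin n → S → ℝ)
    (hact : ∀ i s, (Pfam i).act s = M0.act s)
    (hp_in : ∀ i, ∀ s ∈ Ω i, ∀ (a : A) (s' : S), (Pfam i).p s a s' = M0.p s a s')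
    (hp_abs : ∀ i, ∀ s ∉ Ω i, ∀ a : A, (Pfam i).p s a s = 1)
    (hr_in : ∀ i, ∀ s ∈ Ω i, ∀ a : A, ∀ s' ∈ Ω i, (Pfam i).r s a s' = M0.r s a s')
    (hr_up : ∀ i j, i < j → ∀ s ∈ Ω i, ∀ a : A, ∀ s' ∈ Ω j,
      (Pfam i).r s a s' = M0.r s a s' + γ * vfun j s')
    (hr_down : ∀ i j, j < i → ∀ s ∈ Ω i, ∀ a : A, ∀ s' ∈ Ω j,
      (Pfam i).r s a s' = M0.r s a s' - M)
    (hr_abs : ∀ i, ∀ s ∉ Ω i, ∀ (a : A) (s' : S), (Pfam i).r s a s' = 0)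
    (hvfun : ∀ i s, vfun i s = (Pfam i).T γ (vfun i) s) :
    ∀ i, ∀ s ∈ Ω i, vfun i s = v0 s := by
  intro i
  induction i using WellFoundedGT.induction with
  | _ i ih =>
  have hfix := MDP.isFixedPt_T_indicator_of_restriction (Pfam i) M0 hv0 hπ hopt
    (R := Ω i) (F := {s' | ∃ j < i, s' ∈ Ω j}) ?_ (fun s _ => hact i s) (hp_in i) (hp_abs i)
    (hr_in i) ?_ ?_ (hr_abs i)
  · have hv : vfun i = (Ω i : Set S).indicator v0 :=
      ((Pfam i).contractingWith_T hγ0 hγ1).fixedPoint_unique'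
        (funext fun s => (hvfun i s).symm) hfix
    exact fun s hs => hv ▸ Set.indicator_of_mem hs v0
  · rintro s hs s' ⟨j, hji, hs'⟩
    exact hmono i j hji s hs s' hs'
  · intro s hs a s' hs'R hs'F
    obtain ⟨j, hj⟩ := hcover s'
    have hij : i < j := lt_of_le_of_ne (not_lt.1 fun hji => hs'F ⟨j, hji, hj⟩)
      (by rintro rfl; exact hs'R hj)
    rw [hr_up i j hij s hs a s' hj, ih j hij s' hj]
  · rintro s hs a s' - ⟨j, hji, hs'⟩
    rw [hr_down i j hji s hs a s' hs']
    linarith [M0.neg_le_mul_of_penalty hγ0 hγ1 hM s']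

/-- recursive application over an index-ordered partition
`Ω 0, …, Ω (n-1)`: each recursively restricted optimal value function `vfun i`
(boundary reward `γ • vfun j` towards higher-indexed regions, heavy penalty `-M`
towards lower-indexed regions) agrees with the optimal value function of the
original MDP on `Ω i`. -/
theorem recursive_restriction_agrees [Fintype A] [Nonempty S] [Nonempty A]
    (M0 : MDP S A) (γ : ℝ) (hγ0 : 0 ≤ γ) (hγ1 : γ < 1)
    (v0 : S → ℝ) (hv0 : ∀ s, v0 s = M0.T γ v0 s)
    (n : ℕ) (Ω : Fin n → Finset S)
    (hdisj : ∀ i j, i ≠ j → Disjoint (Ω i) (Ω j))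
    (hcover : ∀ s : S, ∃ i, s ∈ Ω i)
    -- an optimal policy whose transitions never decrease the region index
    (πstar : S → A) (hπ : M0.IsPolicy πstar)
    (hopt : ∀ s, v0 s = M0.Q γ v0 s (πstar s))
    (hmono : ∀ i j : Fin n, j < i → ∀ s ∈ Ω i, ∀ s' ∈ Ω j, M0.p s (πstar s) s' = 0)
    -- a sufficiently large penalty
    (M : ℝ)
    (hM : (univ.sup' univ_nonempty (fun x : S × A × S => |M0.r x.1 x.2.1 x.2.2|) +
             γ * univ.sup' univ_nonempty (fun s => |v0 s|)) / (1 - γ) +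
            univ.sup' univ_nonempty v0 - univ.inf' univ_nonempty v0 < M)
    -- the family of restricted MDPs and their optimal value functions
    (Pfam : Fin n → MDP S A) (vfun : Fin n → S → ℝ)
    (hact : ∀ i s, (Pfam i).act s = M0.act s)
    (hp_in : ∀ i, ∀ s ∈ Ω i, ∀ (a : A) (s' : S), (Pfam i).p s a s' = M0.p s a s')
    (hp_abs : ∀ i, ∀ s ∉ Ω i, ∀ a : A, (Pfam i).p s a s = 1)
    (hr_in : ∀ i, ∀ s ∈ Ω i, ∀ a : A, ∀ s' ∈ Ω i, (Pfam i).r s a s' = M0.r s a s')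
    (hr_up : ∀ i j, i < j → ∀ s ∈ Ω i, ∀ a : A, ∀ s' ∈ Ω j,
      (Pfam i).r s a s' = M0.r s a s' + γ * vfun j s')
    (hr_down : ∀ i j, j < i → ∀ s ∈ Ω i, ∀ a : A, ∀ s' ∈ Ω j,
      (Pfam i).r s a s' = M0.r s a s' - M)
    (hr_abs : ∀ i, ∀ s ∉ Ω i, ∀ (a : A) (s' : S), (Pfam i).r s a s' = 0)
    (hvfun : ∀ i s, vfun i s = (Pfam i).T γ (vfun i) s) :
    ∀ i, ∀ s ∈ Ω i, vfun i s = v0 s :=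
  recursive_restriction_agrees_general M0 γ hγ0 hγ1 v0 hv0 n Ω hcover πstar hπ hopt hmono M hM Pfam
    vfun hact hp_in hp_abs hr_in hr_up hr_down hr_abs hvfun
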